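/- Let u, u' ∈ L²(n) ∩ L^∞(n), and for π ∈ 𝒞 and x ∈ ℝ set m_π(x) = ∫₀¹ (exp(α(λ(u(x) − πβ(x)) + (1−λ)(u'(x) − πβ(x)))) − 1) dλ. Define γ(x) = sup_{π ∈ 𝒞} m_π(x) if u(x) ≥ u'(x) and γ(x) = inf_{π ∈ 𝒞} m_π(x) if u(x) < u'(x). Then: (a) for every π ∈ 𝒞 and every x, g_α(u(x) − πβ(x)) − g_α(u'(x) − πβ(x)) ≤ γ(x)·(u(x) − u'(x)); and (b) if the function x ↦ γ(x)·(u(x) − u'(x)) is n-integrable, then for every z ∈ ℝ, f(z, u) − f(z, u') ≤ ∫ γ(x)·(u(x) − u'(x)) dn(x). -/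

import Mathlib

/-!
By the fundamental theorem of calculus along the segment from `b` to `a`,
`g_α a - g_α b = m · (a - b)`, where `m` is the mean of `g_α' = exp(α ·) - 1` on that segment.
Shifting both arguments by `πβ(x)` leaves `a - b = u(x) - u'(x)` unchanged, so bounding `m_π(x)`
by its supremum or infimum over the compact set `𝒞`, according to the sign of `u(x) - u'(x)`,
gives (a). Since `0 ≤ g_α(y) ≤ α e^{αK} y²` for `|y| ≤ K`, (a) can be integrated; it then bounds
each term of the infimum defining `f(z, u)` by the corresponding term for `u'` plus
`∫ γ (u - u') dn`, which gives (b).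
-/

open MeasureTheory

/-- `g α y = (exp(α y) − α y − 1)/α`. -/
noncomputable def g (α y : ℝ) : ℝ := (Real.exp (α * y) - α * y - 1) / α

/-- `u ∈ L²(n) ∩ L^∞(n)`: measurable, square integrable and essentially bounded. -/
def MemL2Linf (n : Measure ℝ) (u : ℝ → ℝ) : Prop :=
  Measurable u ∧ Integrable (fun x => (u x) ^ 2) n ∧ ∃ K : ℝ, ∀ᵐ x ∂n, |u x| ≤ K

/-- The generator
`f(z,u) = inf_{π ∈ 𝒞} [ (α/2)(πσ − (z + θ/α))² + ∫ g_α(u(x) − πβ(x)) dn(x) ] − θz − θ²/(2α)`. -/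
noncomputable def gen (α θ σ : ℝ) (β : ℝ → ℝ) (𝒞 : Set ℝ) (n : Measure ℝ)
    (z : ℝ) (u : ℝ → ℝ) : ℝ :=
  sInf ((fun π => α / 2 * (π * σ - (z + θ / α)) ^ 2
      + ∫ x, g α (u x - π * β x) ∂n) '' 𝒞) - θ * z - θ ^ 2 / (2 * α)

/-- The paper's `m_π(x)` is `gSlope α (u x - π * β x) (u' x - π * β x)`. -/
noncomputable def gSlope (α a b : ℝ) : ℝ :=
  ∫ l in (0:ℝ)..1, (Real.exp (α * (l * a + (1 - l) * b)) - 1)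

lemma g_sub_g_eq_gSlope_mul {α : ℝ} (hα : α ≠ 0) (a b : ℝ) :
    g α a - g α b = gSlope α a b * (a - b) := by
  have hpath : ∀ l : ℝ, HasDerivAt (fun l : ℝ => l * a + (1 - l) * b) (a - b) l := fun l => by
    refine (((hasDerivAt_id l).mul_const a).add
      (((hasDerivAt_const l (1:ℝ)).sub (hasDerivAt_id l)).mul_const b)).congr_deriv ?_
    ring
  have hderiv : ∀ l : ℝ, HasDerivAt (fun l : ℝ => g α (l * a + (1 - l) * b))
      ((Real.exp (α * (l * a + (1 - l) * b)) - 1) * (a - b)) l := fun l => by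
    refine ((((((hpath l).const_mul α).exp).sub ((hpath l).const_mul α)).sub_const 1).div_const
      α).congr_deriv ?_
    field_simp
  have hcont : Continuous fun l : ℝ => (Real.exp (α * (l * a + (1 - l) * b)) - 1) * (a - b) := by
    fun_prop
  have hFTC := intervalIntegral.integral_eq_sub_of_hasDerivAt
    (fun l _ => hderiv l) (hcont.intervalIntegrable 0 1)
  rw [intervalIntegral.integral_mul_const] at hFTC
  rw [gSlope, hFTC]
  norm_num

lemma continuous_gSlope_sub_mul (α a b B : ℝ) :
    Continuous fun p : ℝ => gSlope α (a - p * B) (b - p * B) := by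
  unfold gSlope
  fun_prop

lemma g_sub_g_le_ite_mul {α : ℝ} (hα : α ≠ 0) {C : Set ℝ} (hC : IsCompact C)
    {p : ℝ} (hp : p ∈ C) (a b B : ℝ) :
    g α (a - p * B) - g α (b - p * B) ≤
      (if b ≤ a then sSup ((fun p => gSlope α (a - p * B) (b - p * B)) '' C)
        else sInf ((fun p => gSlope α (a - p * B) (b - p * B)) '' C)) * (a - b) := by
  have hcompact := hC.image (continuous_gSlope_sub_mul α a b B)
  rw [g_sub_g_eq_gSlope_mul hα, sub_sub_sub_cancel_right]
  split_ifs with hba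
  · exact mul_le_mul_of_nonneg_right (le_csSup hcompact.bddAbove ⟨p, hp, rfl⟩) (by linarith)
  · exact mul_le_mul_of_nonpos_right (csInf_le hcompact.bddBelow ⟨p, hp, rfl⟩) (by linarith)

lemma g_nonneg {α : ℝ} (hα : 0 ≤ α) (y : ℝ) : 0 ≤ g α y :=
  div_nonneg (by linarith [Real.add_one_le_exp (α * y)]) hα

lemma exp_sub_sub_one_le_sq_mul_exp_abs (t : ℝ) : Real.exp t - t - 1 ≤ t ^ 2 * Real.exp |t| := by
  have h1 := Real.add_one_le_exp t
  have hmul : (1 - t) * Real.exp t ≤ 1 := by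
    have := mul_le_mul_of_nonneg_right (Real.add_one_le_exp (-t)) (Real.exp_pos t).le
    rw [← Real.exp_add, neg_add_cancel, Real.exp_zero] at this
    linarith
  rcases abs_cases t with ⟨h, ht⟩ | ⟨h, ht⟩ <;> rw [h]
  · nlinarith [Real.exp_pos t, mul_le_mul_of_nonneg_left hmul ht]
  · have hone : (1:ℝ) ≤ Real.exp (-t) := Real.one_le_exp (by linarith)
    nlinarith [Real.exp_pos t, sq_nonneg t, mul_le_mul_of_nonpos_left h1 ht.le]

lemma g_le_of_abs_le {α : ℝ} (hα : 0 < α) {y K : ℝ} (hy : |y| ≤ K) :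
    g α y ≤ α * Real.exp (α * K) * y ^ 2 := by
  have hexp : Real.exp |α * y| ≤ Real.exp (α * K) := by
    rw [Real.exp_le_exp, abs_mul, abs_of_pos hα]
    exact mul_le_mul_of_nonneg_left hy hα.le
  rw [g, div_le_iff₀ hα]
  calc Real.exp (α * y) - α * y - 1 ≤ (α * y) ^ 2 * Real.exp |α * y| :=
        exp_sub_sub_one_le_sq_mul_exp_abs _
    _ ≤ (α * y) ^ 2 * Real.exp (α * K) := by gcongr
    _ = α * Real.exp (α * K) * y ^ 2 * α := by ring

namespace MemL2Linf

variable {n : Measure ℝ} {u v : ℝ → ℝ}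

lemma sub_mul_const (hu : MemL2Linf n u) (hv : MemL2Linf n v) (c : ℝ) :
    MemL2Linf n fun x => u x - c * v x := by
  obtain ⟨hu_meas, hu_sq, Ku, hKu⟩ := hu
  obtain ⟨hv_meas, hv_sq, Kv, hKv⟩ := hv
  refine ⟨hu_meas.sub (hv_meas.const_mul c), ?_, Ku + |c| * Kv, ?_⟩
  · refine ((hu_sq.const_mul 2).add (hv_sq.const_mul (2 * c ^ 2))).mono'
      (by fun_prop) (ae_of_all _ fun x => ?_)
    rw [Real.norm_eq_abs, abs_of_nonneg (sq_nonneg _), Pi.add_apply]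
    nlinarith [sq_nonneg (u x + c * v x)]
  · filter_upwards [hKu, hKv] with x hux hvx
    calc |u x - c * v x| ≤ |u x| + |c| * |v x| := by rw [← abs_mul]; exact abs_sub _ _
      _ ≤ Ku + |c| * Kv := by gcongr

lemma integrable_g {α : ℝ} (hα : 0 < α) (hu : MemL2Linf n u) :
    Integrable (fun x => g α (u x)) n := by
  obtain ⟨hu_meas, hu_sq, K, hK⟩ := hu
  refine (hu_sq.const_mul (α * Real.exp (α * K))).mono' (by unfold g; fun_prop) ?_
  filter_upwards [hK] with x hx
  rw [Real.norm_eq_abs, abs_of_nonneg (g_nonneg hα.le _)]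
  exact g_le_of_abs_le hα hx

end MemL2Linf

lemma integral_le_integral_add_of_le_add {X : Type*} [MeasurableSpace X] {μ : Measure X}
    {f g h : X → ℝ} (hf : 0 ≤ᵐ[μ] f) (hg : Integrable g μ) (hh : Integrable h μ)
    (hle : ∀ᵐ x ∂μ, f x ≤ g x + h x) : ∫ x, f x ∂μ ≤ ∫ x, g x ∂μ + ∫ x, h x ∂μ := by
  rw [← integral_add hg hh]
  exact integral_mono_of_nonneg hf (hg.add hh) hle

lemma csInf_image_le_csInf_image_add {ι : Type*} {C : Set ι} (hC : C.Nonempty)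
    {F G : ι → ℝ} (hF : BddBelow (F '' C)) {c : ℝ} (hFG : ∀ i ∈ C, F i ≤ G i + c) :
    sInf (F '' C) ≤ sInf (G '' C) + c := by
  rw [← sub_le_iff_le_add]
  refine le_csInf (hC.image G) ?_
  rintro _ ⟨i, hi, rfl⟩
  linarith [csInf_le hF ⟨i, hi, rfl⟩, hFG i hi]

lemma gen_sub_gen_le {α θ σ : ℝ} (hα : 0 ≤ α) {β : ℝ → ℝ} {C : Set ℝ} (hC : C.Nonempty)
    {n : Measure ℝ} {u u' : ℝ → ℝ} {c : ℝ}
    (hint : ∀ p ∈ C, ∫ x, g α (u x - p * β x) ∂n ≤ ∫ x, g α (u' x - p * β x) ∂n + c) (z : ℝ) :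
    gen α θ σ β C n z u - gen α θ σ β C n z u' ≤ c := by
  have hbdd : BddBelow ((fun p => α / 2 * (p * σ - (z + θ / α)) ^ 2
      + ∫ x, g α (u x - p * β x) ∂n) '' C) := by
    refine ⟨0, ?_⟩
    rintro _ ⟨p, -, rfl⟩
    have : 0 ≤ ∫ x, g α (u x - p * β x) ∂n := integral_nonneg fun x => g_nonneg hα _
    positivity
  have := csInf_image_le_csInf_image_add hC hbdd (c := c) (G := fun p =>
      α / 2 * (p * σ - (z + θ / α)) ^ 2 + ∫ x, g α (u' x - p * β x) ∂n) fun p hp => by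
    linarith [hint p hp]
  unfold gen
  linarith

theorem stmt10_general (α θ σ : ℝ) (hα : 0 < α) (n : Measure ℝ)
    (β : ℝ → ℝ) (hβ : MemL2Linf n β)
    (𝒞 : Set ℝ) (h𝒞c : IsCompact 𝒞) (h𝒞ne : 𝒞.Nonempty)
    (u u' : ℝ → ℝ) (hu' : MemL2Linf n u')
    (m : ℝ → ℝ → ℝ)
    (hm : ∀ π x, m π x =
      ∫ l in (0:ℝ)..1,
        (Real.exp (α * (l * (u x - π * β x) + (1 - l) * (u' x - π * β x))) - 1))
    (γ : ℝ → ℝ)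
    (hγ : ∀ x, γ x =
      if u' x ≤ u x then sSup ((fun π => m π x) '' 𝒞)
      else sInf ((fun π => m π x) '' 𝒞)) :
    (∀ π ∈ 𝒞, ∀ x : ℝ,
      g α (u x - π * β x) - g α (u' x - π * β x) ≤ γ x * (u x - u' x)) ∧
    (Integrable (fun x => γ x * (u x - u' x)) n →
      ∀ z : ℝ, gen α θ σ β 𝒞 n z u - gen α θ σ β 𝒞 n z u' ≤
        ∫ x, γ x * (u x - u' x) ∂n) := by
  obtain rfl : m = fun π x => gSlope α (u x - π * β x) (u' x - π * β x) := funext₂ hm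
  have hpointwise : ∀ π ∈ 𝒞, ∀ x : ℝ,
      g α (u x - π * β x) - g α (u' x - π * β x) ≤ γ x * (u x - u' x) := fun π hπ x => by
    rw [hγ x]
    exact g_sub_g_le_ite_mul hα.ne' h𝒞c hπ (u x) (u' x) (β x)
  refine ⟨hpointwise, fun hint => gen_sub_gen_le hα.le h𝒞ne fun π hπ => ?_⟩
  exact integral_le_integral_add_of_le_add (ae_of_all _ fun x => g_nonneg hα.le _)
    ((hu'.sub_mul_const hβ π).integrable_g hα) hint
    (ae_of_all _ fun x => by linarith [hpointwise π hπ x])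

theorem stmt10 (α θ σ : ℝ) (hα : 0 < α) (n : Measure ℝ) [SigmaFinite n]
    (β : ℝ → ℝ) (hβ : MemL2Linf n β)
    (𝒞 : Set ℝ) (h𝒞c : IsCompact 𝒞) (h𝒞ne : 𝒞.Nonempty) (h𝒞0 : (0:ℝ) ∈ 𝒞)
    (u u' : ℝ → ℝ) (hu : MemL2Linf n u) (hu' : MemL2Linf n u')
    (m : ℝ → ℝ → ℝ)
    (hm : ∀ π x, m π x =
      ∫ l in (0:ℝ)..1,
        (Real.exp (α * (l * (u x - π * β x) + (1 - l) * (u' x - π * β x))) - 1))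
    (γ : ℝ → ℝ)
    (hγ : ∀ x, γ x =
      if u' x ≤ u x then sSup ((fun π => m π x) '' 𝒞)
      else sInf ((fun π => m π x) '' 𝒞)) :
    (∀ π ∈ 𝒞, ∀ x : ℝ,
      g α (u x - π * β x) - g α (u' x - π * β x) ≤ γ x * (u x - u' x)) ∧
    (Integrable (fun x => γ x * (u x - u' x)) n →
      ∀ z : ℝ, gen α θ σ β 𝒞 n z u - gen α θ σ β 𝒞 n z u' ≤
        ∫ x, γ x * (u x - u' x) ∂n) :=
  stmt10_general α θ σ hα n β hβ 𝒞 h𝒞c h𝒞ne u u' hu' m hm γ hγ
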